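/- arXiv:2211.09870 — 2 statements merged into one kernel-verified Lean document; each statement's English description precedes it below -/
import Mathlib

section
/- Let a_1 ≥ a_2 and b_1 ≥ b_2 be positive integers with b_1 ≥ a_1 and b_2 ≥ a_2. Then: (i) for every finite simple graph W with at least one vertex, t(K_{b_1, b_2}, W)^{a_1 a_2} ≥ t(K_{a_1, a_2}, W)^{b_1 b_2}; and (ii) for every real c < (b_1 b_2)/(a_1 a_2) there exists a finite simple graph W with t(K_{a_1,a_2}, W) > 0 and t(K_{b_1,b_2}, W) < t(K_{a_1,a_2}, W)^c. (That is, ρ(K_{a_1,a_2}, K_{b_1,b_2}) = b_1 b_2 / (a_1 a_2) in this regime.) -/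
/-- The homomorphism density `t(G, W)`. -/
noncomputable def homDensity {α β : Type} [Fintype α] [Fintype β]
    (G : SimpleGraph α) (W : SimpleGraph β) : ℝ :=
  (Nat.card (G →g W) : ℝ) / (Fintype.card β : ℝ) ^ (Fintype.card α)

/-- The complete bipartite graph `K_{a,b}`. -/
def bipartite (a b : ℕ) : SimpleGraph (Fin a ⊕ Fin b) := completeBipartiteGraph (Fin a) (Fin b)

/-!
Write `d(g)` for the number of common neighbours of a `q`-tuple `g` of vertices of `W`. A
homomorphism `K_{p,q} → W` is a tuple `g` together with `p` vertices of its common neighbourhood,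
so `t(K_{p,q}, W)` is the `p`-th moment of `d(g) / |W|` for a uniformly random `g`. Monotonicity
of power means, `(𝔼 X^p)^p' ≤ (𝔼 X^p')^p` for `p ≤ p'`, applied to each side of the bipartition
gives (i).

For (ii) take `W = K_k`. A `q`-tuple has at least `k - q` common neighbours, exactly `k - q` when
it is injective, and at least a proportion `(1 - q/k)^q` of the tuples are injective. Hence
`k (1 - t(K_{p,q}, K_k)) → pq`, equivalently `-k log t(K_{p,q}, K_k) → pq`, so the ratio
`log t(K_{b₁,b₂}, K_k) / log t(K_{a₁,a₂}, K_k)` tends to `b₁b₂ / (a₁a₂) > c`, which is the claim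
for large `k`.
-/

open Finset Filter Topology
open scoped BigOperators

theorem expect_pow_pow_le_expect_pow_pow {ι : Type*} (s : Finset ι) {x : ι → ℝ}
    (hx : ∀ i ∈ s, 0 ≤ x i) {m n : ℕ} (hmn : m ≤ n) :
    (𝔼 i ∈ s, x i ^ m) ^ n ≤ (𝔼 i ∈ s, x i ^ n) ^ m := by
  rcases s.eq_empty_or_nonempty with rfl | hs
  · simpa using pow_le_pow_of_le_one le_rfl zero_le_one hmn
  rcases m.eq_zero_or_pos with rfl | hm
  · simp [expect_const hs]
  have hmR : (0 : ℝ) < m := by exact_mod_cast hm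
  have hr : 1 ≤ (n : ℝ) / m := (one_le_div hmR).2 (by exact_mod_cast hmn)
  have hpow : ∀ i ∈ s, (x i ^ m) ^ ((n : ℝ) / m) = x i ^ n := fun i hi => by
    rw [← Real.rpow_natCast, ← Real.rpow_mul (hx i hi), mul_div_cancel₀ _ hmR.ne',
      Real.rpow_natCast]
  have hjensen : (𝔼 i ∈ s, x i ^ m) ^ ((n : ℝ) / m) ≤ 𝔼 i ∈ s, x i ^ n := by
    have hw : ∑ _i ∈ s, (#s : ℝ)⁻¹ = 1 := by simp [hs.card_pos.ne']
    have := Real.rpow_arith_mean_le_arith_mean_rpow s (fun _ => (#s : ℝ)⁻¹) (fun i => x i ^ m)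
      (fun _ _ => by positivity) hw (fun i hi => pow_nonneg (hx i hi) m) hr
    rwa [← mul_sum, ← mul_sum, sum_congr rfl hpow, inv_mul_eq_div, inv_mul_eq_div,
      ← expect_eq_sum_div_card, ← expect_eq_sum_div_card] at this
  have hmean : 0 ≤ 𝔼 i ∈ s, x i ^ m := expect_nonneg fun i hi => pow_nonneg (hx i hi) m
  calc (𝔼 i ∈ s, x i ^ m) ^ n = ((𝔼 i ∈ s, x i ^ m) ^ ((n : ℝ) / m)) ^ m := by
        rw [← Real.rpow_natCast _ m, ← Real.rpow_mul hmean, div_mul_cancel₀ _ hmR.ne',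
          Real.rpow_natCast]
    _ ≤ (𝔼 i ∈ s, x i ^ n) ^ m := by gcongr

section BipartiteDensity

variable {β : Type} [Fintype β] (W : SimpleGraph β)

noncomputable def commonNeighborCount {ι : Type*} (g : ι → β) : ℕ :=
  Nat.card {v : β // ∀ j, W.Adj v (g j)}

def bipartiteHomEquiv (p q : ℕ) :
    (bipartite p q →g W) ≃ Σ g : Fin q → β, (Fin p → {v : β // ∀ j, W.Adj v (g j)}) where
  toFun f := ⟨fun j => f (.inr j), fun i => ⟨f (.inl i), fun _ => f.map_rel (by simp [bipartite])⟩⟩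
  invFun x := ⟨Sum.elim (fun i => (x.2 i).1) x.1, by
    rintro (i | i) (j | j) hadj <;> simp [bipartite] at hadj
    · exact (x.2 i).2 j
    · exact ((x.2 j).2 i).symm⟩
  left_inv f := by
    ext (i | j) <;> rfl
  right_inv x := rfl

theorem homDensity_bipartite_eq_expect (p q : ℕ) :
    homDensity (bipartite p q) W
      = 𝔼 g : Fin q → β, ((commonNeighborCount W g : ℝ) / Fintype.card β) ^ p := by
  classical
  have hcard : Nat.card (bipartite p q →g W) = ∑ g : Fin q → β, commonNeighborCount W g ^ p := by
    rw [Nat.card_congr (bipartiteHomEquiv W p q), Nat.card_sigma]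
    simp [commonNeighborCount]
  rw [homDensity, hcard, Fintype.expect_eq_sum_div_card]
  simp [div_pow, sum_div, div_div, pow_add]

def bipartiteCommIso (p q : ℕ) : bipartite p q ≃g bipartite q p where
  __ := Equiv.sumComm _ _
  map_rel_iff' := by rintro (a | a) (b | b) <;> simp [bipartite]

theorem homDensity_congr {α α' : Type} [Fintype α] [Fintype α'] {G : SimpleGraph α}
    {G' : SimpleGraph α'} (e : G ≃g G') : homDensity G W = homDensity G' W := by
  rw [homDensity, homDensity, Nat.card_congr (e.homCongr .refl),
    Fintype.card_congr e.toEquiv]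

theorem homDensity_nonneg {α : Type} [Fintype α] (G : SimpleGraph α) : 0 ≤ homDensity G W := by
  unfold homDensity
  positivity

theorem homDensity_bipartite_comm (p q : ℕ) :
    homDensity (bipartite p q) W = homDensity (bipartite q p) W :=
  homDensity_congr W (bipartiteCommIso p q)

theorem homDensity_bipartite_pow_le_left (q : ℕ) {p p' : ℕ} (hpp' : p ≤ p') :
    homDensity (bipartite p q) W ^ p' ≤ homDensity (bipartite p' q) W ^ p := by
  rw [homDensity_bipartite_eq_expect, homDensity_bipartite_eq_expect]
  exact expect_pow_pow_le_expect_pow_pow _ (fun _ _ => by positivity) hpp'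

theorem homDensity_bipartite_pow_le_right (p : ℕ) {q q' : ℕ} (hqq' : q ≤ q') :
    homDensity (bipartite p q) W ^ q' ≤ homDensity (bipartite p q') W ^ q := by
  rw [homDensity_bipartite_comm W p, homDensity_bipartite_comm W p]
  exact homDensity_bipartite_pow_le_left W p hqq'

theorem homDensity_bipartite_pow_le_of_le {a₁ a₂ b₁ b₂ : ℕ} (h₁ : a₁ ≤ b₁) (h₂ : a₂ ≤ b₂) :
    homDensity (bipartite a₁ a₂) W ^ (b₁ * b₂) ≤ homDensity (bipartite b₁ b₂) W ^ (a₁ * a₂) := by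
  calc homDensity (bipartite a₁ a₂) W ^ (b₁ * b₂)
      = (homDensity (bipartite a₁ a₂) W ^ b₁) ^ b₂ := by rw [← pow_mul]
    _ ≤ (homDensity (bipartite b₁ a₂) W ^ a₁) ^ b₂ := by
        gcongr
        · exact pow_nonneg (homDensity_nonneg W _) _
        · exact homDensity_bipartite_pow_le_left W a₂ h₁
    _ = (homDensity (bipartite b₁ a₂) W ^ b₂) ^ a₁ := by rw [← pow_mul, ← pow_mul, mul_comm]
    _ ≤ (homDensity (bipartite b₁ b₂) W ^ a₂) ^ a₁ := by
        gcongr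
        · exact pow_nonneg (homDensity_nonneg W _) _
        · exact homDensity_bipartite_pow_le_right W b₁ h₂
    _ = homDensity (bipartite b₁ b₂) W ^ (a₁ * a₂) := by rw [← pow_mul, mul_comm]

end BipartiteDensity

theorem commonNeighborCount_top {β ι : Type} [Fintype β] [DecidableEq β] [Fintype ι]
    (g : ι → β) :
    commonNeighborCount (⊤ : SimpleGraph β) g = Fintype.card β - #(univ.image g) := by
  have : {v : β // ∀ j, (⊤ : SimpleGraph β).Adj v (g j)} = {v : β // v ∈ (univ.image g)ᶜ} := by
    congr! with v
    simp [eq_comm]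
  rw [commonNeighborCount, this, Nat.card_eq_fintype_card, Fintype.card_subtype,
    filter_mem_eq_inter, univ_inter, card_compl]

theorem pow_one_sub_div_le_expect_injective (ι β : Type) [Fintype ι] [DecidableEq ι]
    [Fintype β] [DecidableEq β] (h : Fintype.card ι ≤ Fintype.card β) :
    (1 - Fintype.card ι / Fintype.card β : ℝ) ^ Fintype.card ι
      ≤ 𝔼 g : ι → β, if Function.Injective g then (1 : ℝ) else 0 := by
  rw [Fintype.expect_eq_sum_div_card, sum_boole, ← Fintype.card_subtype,
    Fintype.card_congr (Equiv.subtypeInjectiveEquivEmbedding ι β), Fintype.card_embedding_eq,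
    Fintype.card_fun]
  set n := Fintype.card β
  set q := Fintype.card ι
  rcases n.eq_zero_or_pos with hn | hn
  · simp [hn, Nat.le_zero.1 (hn ▸ h)]
  have hdesc : (n - q) ^ q ≤ n.descFactorial q :=
    (Nat.pow_le_pow_left (by omega) q).trans (Nat.pow_sub_le_descFactorial n q)
  rw [Nat.cast_pow, le_div_iff₀ (by positivity), ← mul_pow, sub_mul,
    div_mul_cancel₀ _ (by positivity), one_mul, ← Nat.cast_sub h]
  exact_mod_cast hdesc

theorem one_sub_pow_mul_one_add_mul_le_one {x : ℝ} (hx₀ : 0 ≤ x) (hx₁ : x ≤ 1) (n : ℕ) :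
    (1 - x) ^ n * (1 + n * x) ≤ 1 :=
  calc (1 - x) ^ n * (1 + n * x) ≤ (1 - x) ^ n * (1 + x) ^ n :=
        mul_le_mul_of_nonneg_left (one_add_mul_le_pow (by linarith) n)
          (pow_nonneg (by linarith) n)
    _ = (1 - x ^ 2) ^ n := by rw [← mul_pow]; ring
    _ ≤ 1 := pow_le_one₀ (by nlinarith) (by nlinarith)

section CompleteGraph

variable {p q k : ℕ} (hk : 0 < k) (hqk : q ≤ k)
include hk hqk

theorem pow_one_sub_div_le_homDensity_top :
    (1 - q / k : ℝ) ^ p ≤ homDensity (bipartite p q) (⊤ : SimpleGraph (Fin k)) := by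
  have : NeZero k := ⟨hk.ne'⟩
  rw [homDensity_bipartite_eq_expect]
  refine le_expect univ_nonempty fun g _ => ?_
  have hcount : k - q ≤ commonNeighborCount ⊤ g := by
    rw [commonNeighborCount_top, Fintype.card_fin]
    exact Nat.sub_le_sub_left (card_image_le.trans (by simp)) k
  gcongr
  · exact sub_nonneg.2 (div_le_one_of_le₀ (by exact_mod_cast hqk) k.cast_nonneg)
  · rw [Fintype.card_fin, one_sub_div (by exact_mod_cast hk.ne'), ← Nat.cast_sub hqk]
    gcongr

theorem homDensity_top_le :
    homDensity (bipartite p q) (⊤ : SimpleGraph (Fin k))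
      ≤ 1 - (1 - q / k : ℝ) ^ q * (1 - (1 - q / k) ^ p) := by
  have : NeZero k := ⟨hk.ne'⟩
  have hk' : (0 : ℝ) < k := by exact_mod_cast hk
  have hx₀ : 0 ≤ (q / k : ℝ) := by positivity
  have hx₁ : (q / k : ℝ) ≤ 1 := div_le_one_of_le₀ (by exact_mod_cast hqk) k.cast_nonneg
  set y := (1 - q / k : ℝ) ^ p
  have hy : y ≤ 1 := pow_le_one₀ (by linarith) (by linarith)
  have hpointwise (g : Fin q → Fin k) : ((commonNeighborCount ⊤ g : ℝ) / k) ^ p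
      ≤ 1 - (1 - y) * if Function.Injective g then 1 else 0 := by
    by_cases hg : Function.Injective g
    · rw [if_pos hg, mul_one, sub_sub_cancel, commonNeighborCount_top, card_image_of_injective _ hg,
        card_univ, Fintype.card_fin, Fintype.card_fin, Nat.cast_sub hqk, sub_div, div_self hk'.ne']
    · rw [if_neg hg, mul_zero, sub_zero]
      refine pow_le_one₀ (by positivity) ((div_le_one hk').2 ?_)
      rw [commonNeighborCount_top, Fintype.card_fin]
      exact_mod_cast Nat.sub_le k _
  have hinj := pow_one_sub_div_le_expect_injective (Fin q) (Fin k) (by simpa using hqk)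
  simp only [Fintype.card_fin] at hinj
  calc homDensity (bipartite p q) (⊤ : SimpleGraph (Fin k))
      ≤ 𝔼 g : Fin q → Fin k, (1 - (1 - y) * if Function.Injective g then 1 else 0) := by
        rw [homDensity_bipartite_eq_expect, Fintype.card_fin]
        exact expect_le_expect fun g _ => hpointwise g
    _ = 1 - (1 - y) * 𝔼 g : Fin q → Fin k, if Function.Injective g then 1 else 0 := by
        rw [expect_sub_distrib, expect_const univ_nonempty, mul_expect]
    _ ≤ 1 - (1 - q / k : ℝ) ^ q * (1 - y) := by
        rw [mul_comm]
        gcongr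

theorem mul_one_sub_homDensity_top_le :
    k * (1 - homDensity (bipartite p q) (⊤ : SimpleGraph (Fin k))) ≤ p * q := by
  have hx₁ : (q / k : ℝ) ≤ 1 := div_le_one_of_le₀ (by exact_mod_cast hqk) k.cast_nonneg
  have hbernoulli := one_add_mul_le_pow (a := -(q / k : ℝ)) (by linarith) p
  rw [← sub_eq_add_neg] at hbernoulli
  calc (k : ℝ) * (1 - homDensity (bipartite p q) (⊤ : SimpleGraph (Fin k)))
      ≤ k * (1 - (1 - q / k) ^ p) := by
        gcongr
        exact pow_one_sub_div_le_homDensity_top hk hqk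
    _ ≤ k * (p * (q / k)) := by gcongr; linarith
    _ = p * q := by field_simp [hk.ne']

theorem le_mul_one_sub_homDensity_top :
    p * q * (1 - q / k : ℝ) ^ q / (1 + p * q / k)
      ≤ k * (1 - homDensity (bipartite p q) (⊤ : SimpleGraph (Fin k))) := by
  have hk' : (0 : ℝ) < k := by exact_mod_cast hk
  have hx₀ : 0 ≤ (q / k : ℝ) := by positivity
  have hx₁ : (q / k : ℝ) ≤ 1 := div_le_one_of_le₀ (by exact_mod_cast hqk) k.cast_nonneg
  have hupper := homDensity_top_le (p := p) hk hqk
  have hpow := one_sub_pow_mul_one_add_mul_le_one hx₀ hx₁ p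
  have hpow_le : (1 - q / k : ℝ) ^ p ≤ 1 := pow_le_one₀ (by linarith) (by linarith)
  rw [div_le_iff₀ (by positivity)]
  calc p * q * (1 - q / k : ℝ) ^ q = k * (1 - q / k) ^ q * (p * (q / k)) := by field_simp
    _ ≤ k * (1 - q / k) ^ q * ((1 - (1 - q / k) ^ p) * (1 + p * (q / k))) :=
        mul_le_mul_of_nonneg_left (by linarith) (by positivity)
    _ = k * ((1 - q / k) ^ q * (1 - (1 - q / k) ^ p)) * (1 + p * (q / k)) := by ring
    _ ≤ k * (1 - homDensity (bipartite p q) (⊤ : SimpleGraph (Fin k))) * (1 + p * q / k) := by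
        rw [← mul_div_assoc]
        gcongr
        linarith

end CompleteGraph

theorem tendsto_mul_one_sub_homDensity_top (p q : ℕ) :
    Tendsto (fun k : ℕ => (k : ℝ) * (1 - homDensity (bipartite p q) (⊤ : SimpleGraph (Fin k))))
      atTop (𝓝 (p * q)) := by
  have hlim : Tendsto (fun k : ℕ => p * q * (1 - q / k : ℝ) ^ q / (1 + p * q / k)) atTop
      (𝓝 (p * q)) := by
    have h₁ := tendsto_const_div_atTop_nhds_zero_nat (q : ℝ)
    have h₂ := tendsto_const_div_atTop_nhds_zero_nat (p * q : ℝ)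
    have := ((((tendsto_const_nhds (x := (1 : ℝ))).sub h₁).pow q).const_mul (p * q : ℝ)).div
      (tendsto_const_nhds.add h₂) (by norm_num : (1 : ℝ) + 0 ≠ 0)
    simpa only [sub_zero, one_pow, mul_one, add_zero, div_one, Pi.div_def] using this
  refine tendsto_of_tendsto_of_tendsto_of_le_of_le' hlim tendsto_const_nhds ?_ ?_ <;>
    filter_upwards [eventually_ge_atTop (max q 1)] with k hk
  · exact le_mul_one_sub_homDensity_top (by omega) (by omega)
  · exact mul_one_sub_homDensity_top_le (by omega) (by omega)

section Deficit

variable {u : ℕ → ℝ} {A : ℝ}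

theorem tendsto_of_tendsto_mul_one_sub
    (h : Tendsto (fun k : ℕ => (k : ℝ) * (1 - u k)) atTop (𝓝 A)) :
    Tendsto u atTop (𝓝 1) := by
  have hdiv := h.mul (tendsto_const_div_atTop_nhds_zero_nat (1 : ℝ))
  rw [mul_zero] at hdiv
  have hsub : Tendsto (fun k => 1 - u k) atTop (𝓝 0) := by
    refine hdiv.congr' ?_
    filter_upwards [eventually_gt_atTop 0] with k hk
    field_simp
  simpa using (tendsto_const_nhds (x := (1 : ℝ))).sub hsub

theorem tendsto_mul_neg_log_of_tendsto_mul_one_sub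
    (h : Tendsto (fun k : ℕ => (k : ℝ) * (1 - u k)) atTop (𝓝 A)) :
    Tendsto (fun k : ℕ => (k : ℝ) * -Real.log (u k)) atTop (𝓝 A) := by
  have hu := tendsto_of_tendsto_mul_one_sub h
  have hupper : Tendsto (fun k : ℕ => (k : ℝ) * (1 - u k) / u k) atTop (𝓝 A) := by
    have := h.div hu one_ne_zero
    rwa [div_one] at this
  refine tendsto_of_tendsto_of_tendsto_of_le_of_le' h hupper ?_ ?_ <;>
    filter_upwards [hu.eventually_const_lt one_pos] with k hk
  · have := Real.log_le_sub_one_of_pos hk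
    gcongr
    linarith
  · have := Real.one_sub_inv_le_log_of_pos hk
    rw [mul_div_assoc, sub_div, div_self hk.ne', one_div]
    gcongr
    linarith

end Deficit

theorem eventually_lt_rpow_of_tendsto_mul_one_sub {u v : ℕ → ℝ} {A B c : ℝ}
    (hu : Tendsto (fun k : ℕ => (k : ℝ) * (1 - u k)) atTop (𝓝 A))
    (hv : Tendsto (fun k : ℕ => (k : ℝ) * (1 - v k)) atTop (𝓝 B)) (hc : c * A < B) :
    ∀ᶠ k in atTop, 0 < u k ∧ v k < u k ^ c := by
  have hlog := ((tendsto_mul_neg_log_of_tendsto_mul_one_sub hu).const_mul c).eventually_lt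
    (tendsto_mul_neg_log_of_tendsto_mul_one_sub hv) hc
  filter_upwards [hlog, (tendsto_of_tendsto_mul_one_sub hu).eventually_const_lt one_pos,
    (tendsto_of_tendsto_mul_one_sub hv).eventually_const_lt one_pos, eventually_gt_atTop 0]
    with k hlog hu₀ hv₀ hk
  refine ⟨hu₀, ?_⟩
  rw [Real.rpow_def_of_pos hu₀, ← Real.exp_log hv₀, Real.exp_lt_exp]
  refine lt_of_mul_lt_mul_left ?_ (Nat.cast_nonneg k)
  linarith

theorem stmt_16_general (a₁ a₂ b₁ b₂ : ℕ) (ha₂ : 0 < a₂)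
    (ha : a₂ ≤ a₁) (h₁ : a₁ ≤ b₁) (h₂ : a₂ ≤ b₂) :
    (∀ (β : Type) [Fintype β] [Nonempty β] (W : SimpleGraph β),
      homDensity (bipartite b₁ b₂) W ^ (a₁ * a₂) ≥
        homDensity (bipartite a₁ a₂) W ^ (b₁ * b₂)) ∧
    (∀ c : ℝ, c < ((b₁ : ℝ) * b₂) / ((a₁ : ℝ) * a₂) →
      ∃ (N : ℕ) (W : SimpleGraph (Fin N)), 0 < N ∧
        0 < homDensity (bipartite a₁ a₂) W ∧
        homDensity (bipartite b₁ b₂) W < homDensity (bipartite a₁ a₂) W ^ c) := by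
  refine ⟨fun β _ _ W => homDensity_bipartite_pow_le_of_le W h₁ h₂, fun c hc => ?_⟩
  have hA : (0 : ℝ) < a₁ * a₂ := by
    have : 0 < a₁ := ha₂.trans_le ha
    positivity
  obtain ⟨N, ⟨hpos, hlt⟩, hN⟩ := ((eventually_lt_rpow_of_tendsto_mul_one_sub
    (tendsto_mul_one_sub_homDensity_top a₁ a₂) (tendsto_mul_one_sub_homDensity_top b₁ b₂)
    ((lt_div_iff₀ hA).1 hc)).and (eventually_gt_atTop 0)).exists
  exact ⟨N, ⊤, hN, hpos, hlt⟩

theorem stmt_16 (a₁ a₂ b₁ b₂ : ℕ) (ha₂ : 0 < a₂) (hb₂ : 0 < b₂)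
    (ha : a₂ ≤ a₁) (hb : b₂ ≤ b₁) (h₁ : a₁ ≤ b₁) (h₂ : a₂ ≤ b₂) :
    (∀ (β : Type) [Fintype β] [Nonempty β] (W : SimpleGraph β),
      homDensity (bipartite b₁ b₂) W ^ (a₁ * a₂) ≥
        homDensity (bipartite a₁ a₂) W ^ (b₁ * b₂)) ∧
    (∀ c : ℝ, c < ((b₁ : ℝ) * b₂) / ((a₁ : ℝ) * a₂) →
      ∃ (N : ℕ) (W : SimpleGraph (Fin N)), 0 < N ∧
        0 < homDensity (bipartite a₁ a₂) W ∧
        homDensity (bipartite b₁ b₂) W < homDensity (bipartite a₁ a₂) W ^ c) :=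
  stmt_16_general a₁ a₂ b₁ b₂ ha₂ ha h₁ h₂
end

section
/- Let k ≥ 1 and let a = (a_1, …, a_k) and b = (b_1, …, b_k) be nonincreasing sequences of positive integers with a_1 + ⋯ + a_k = b_1 + ⋯ + b_k. Say that a majorizes b if Σ_{j=1}^i a_j ≥ Σ_{j=1}^i b_j for every 1 ≤ i ≤ k. Let K_a denote the complete multipartite graph with parts of sizes a_1, …, a_k. Then a majorizes b if and only if t(K_a, W) ≥ t(K_b, W) for every finite simple graph W with at least one vertex. -/
/-!
If `a` majorizes `b`, then `K_a` is reached from `K_b` by moving single vertices from a part to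
a part that is at least as large. For such a move, fix every other part and let `g s t` count the
homomorphisms when the two parts involved have sizes `s` and `t`. Given the images of all vertices
but the last two, each of these can be placed in a set depending only on its side, so
`2 g (s+1) (t+1) ≤ g (s+2) t + g s (t+2)` by AM–GM. Together with the symmetry of `g`, this
convexity along antidiagonals gives `g x (y+1) ≤ g (x+1) y` for `y ≤ x`.

Conversely, if `∑_{j ≤ i} b_j > ∑_{j ≤ i} a_j`, take `W` complete multipartite whose parts up to
`i` have `N` vertices and whose other parts are single vertices. A homomorphism `K_c → W` is a
proper colouring of `K_c` by the parts of `W` with a choice of vertex in each colour class, and a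
proper colouring puts at most `∑_{j ≤ i} a_j` vertices of `K_a` into the large parts since `a` is
nonincreasing. Hence `N ^ ∑_{j ≤ i} b_j ≤ hom(K_b, W) ≤ hom(K_a, W) ≤ C N ^ ∑_{j ≤ i} a_j` with `C`
independent of `N`, which fails for `N > C`.
-/

open Finset SimpleGraph

local notation "K⟦" c "⟧" => completeMultipartiteGraph fun i => Fin ((c : _ → ℕ) i)

theorem le_of_symm_of_two_mul_le {g : ℕ → ℕ → ℤ} (hsymm : ∀ s t, g s t = g t s)
    (hconv : ∀ s t, 2 * g (s + 1) (t + 1) ≤ g (s + 2) t + g s (t + 2)) {x y : ℕ} (h : y ≤ x) :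
    g x (y + 1) ≤ g (x + 1) y := by
  have key : ∀ r s t,
      g (s + 1) (t + r) - g s (t + r + 1) ≤ g (s + r + 1) t - g (s + r) (t + 1) := by
    intro r
    induction r with
    | zero => simp
    | succ r ih =>
      intro s t
      have := hconv s (t + r)
      have := ih (s + 1) t
      ring_nf at *
      linarith
  obtain ⟨r, rfl⟩ := Nat.exists_eq_add_of_le h
  have := key r y y
  rw [hsymm (y + 1), hsymm y (y + r + 1)] at this
  linarith

namespace SimpleGraph

section Labelled

variable {ι V V' β : Type*} (W : SimpleGraph β)

theorem card_hom_comap_top_eq_of_card_fiber [Finite V] [Finite V'] {p : V → ι} {q : V' → ι}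
    (h : ∀ m, Nat.card {v // p v = m} = Nat.card {v // q v = m}) :
    Nat.card ((⊤ : SimpleGraph ι).comap p →g W) =
      Nat.card ((⊤ : SimpleGraph ι).comap q →g W) := by
  let E m : {v // p v = m} ≃ {v // q v = m} := (Finite.card_eq.mp (h m)).some
  let f : (⊤ : SimpleGraph ι).comap p ≃g (⊤ : SimpleGraph ι).comap q :=
    { toEquiv := Equiv.ofFiberEquiv E
      map_rel_iff' := by
        intro u v
        simp only [comap_adj, top_adj]
        rw [Equiv.ofFiberEquiv_map (g := q) E u, Equiv.ofFiberEquiv_map (g := q) E v] }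
  exact Nat.card_congr (f.homCongr .refl)

theorem card_fiber_sigma_fst (c : ι → ℕ) (m : ι) :
    Nat.card {v : Σ m, Fin (c m) // v.1 = m} = c m := by
  rw [Nat.card_congr (Equiv.sigmaSubtype m), Nat.card_eq_fintype_card, Fintype.card_fin]

theorem card_hom_eq_of_card_fiber [Finite ι] [Finite V] {p : V → ι} {c : ι → ℕ}
    (h : ∀ m, Nat.card {v // p v = m} = c m) :
    Nat.card ((⊤ : SimpleGraph ι).comap p →g W) = Nat.card (K⟦c⟧ →g W) :=
  card_hom_comap_top_eq_of_card_fiber W fun m => by rw [h, card_fiber_sigma_fst]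

theorem card_hom_completeMultipartite_comp_perm [Fintype ι] (c : ι → ℕ) (σ : Equiv.Perm ι) :
    Nat.card (K⟦c ∘ σ⟧ →g W) = Nat.card (K⟦c⟧ →g W) :=
  Nat.card_congr <| Iso.homCongr
    { toEquiv := Equiv.sigmaCongrLeft σ (β := fun m => Fin (c m))
      map_rel_iff' := by rintro ⟨m, x⟩ ⟨m', y⟩; simp [σ.injective.ne_iff] } .refl

theorem card_fiber_option_elim [Fintype V] [DecidableEq ι] (p : V → ι) (i m : ι) :
    Nat.card {o : Option V // Option.elim o i p = m} =
      Nat.card {v // p v = m} + (Pi.single i 1 : ι → ℕ) m := by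
  simp only [Nat.card_eq_fintype_card, Fintype.card_subtype, card_filter, Fintype.sum_option,
    Option.elim_none, Option.elim_some, Pi.single_apply]
  by_cases h : m = i
  · simp only [h, if_true, add_comm]
  · simp only [h, Ne.symm h, if_false, zero_add, add_zero]
    rfl

/-- The possible images of a new vertex added to part `i`. -/
def Hom.extensionSet {W : SimpleGraph β} {p : V → ι} (φ : (⊤ : SimpleGraph ι).comap p →g W)
    (i : ι) : Set β :=
  {w | ∀ v, p v ≠ i → W.Adj (φ v) w}

def homOptionElimEquiv (p : V → ι) (i : ι) :
    ((⊤ : SimpleGraph ι).comap (Option.elim · i p) →g W) ≃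
      Σ φ : (⊤ : SimpleGraph ι).comap p →g W, φ.extensionSet i where
  toFun ψ := ⟨⟨fun v => ψ (some v), fun h => ψ.map_adj h⟩, ψ none, fun _ hv => ψ.map_adj hv⟩
  invFun x := ⟨fun o => o.elim x.2 x.1, by
    rintro (_ | u) (_ | v) h
    · exact absurd rfl h
    · exact (x.2.2 v (Ne.symm h)).symm
    · exact x.2.2 u h
    · exact x.1.map_adj h⟩
  left_inv ψ := by ext (_ | v) <;> rfl
  right_inv x := rfl

theorem extensionSet_homOptionElimEquiv_symm_self {p : V → ι} {i : ι}
    (x : Σ φ : (⊤ : SimpleGraph ι).comap p →g W, φ.extensionSet i) :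
    ((homOptionElimEquiv W p i).symm x).extensionSet i = x.1.extensionSet i := by
  ext w
  refine ⟨fun hw v hv => hw (some v) hv, ?_⟩
  rintro hw (_ | v) hv
  exacts [absurd rfl hv, hw v hv]

theorem extensionSet_homOptionElimEquiv_symm_subset {p : V → ι} {i : ι}
    (x : Σ φ : (⊤ : SimpleGraph ι).comap p →g W, φ.extensionSet i) (j : ι) :
    ((homOptionElimEquiv W p i).symm x).extensionSet j ⊆ x.1.extensionSet j :=
  fun _ hw v hv => hw (some v) hv

noncomputable abbrev Hom.fintypeOfFinite {G : SimpleGraph V} [Finite V] [Finite β] :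
    Fintype (G →g W) :=
  Fintype.ofFinite _

attribute [local instance] Hom.fintypeOfFinite

variable [Fintype V] [Fintype β]

theorem card_hom_option_elim (p : V → ι) (i : ι) :
    Nat.card ((⊤ : SimpleGraph ι).comap (Option.elim · i p) →g W) =
      ∑ φ : (⊤ : SimpleGraph ι).comap p →g W, Nat.card (φ.extensionSet i) := by
  rw [Nat.card_congr (homOptionElimEquiv W p i), Nat.card_sigma]

theorem card_hom_option_elim_option_elim_self (p : V → ι) (i : ι) :
    Nat.card ((⊤ : SimpleGraph ι).comap (Option.elim · i (Option.elim · i p)) →g W) =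
      ∑ φ : (⊤ : SimpleGraph ι).comap p →g W, Nat.card (φ.extensionSet i) ^ 2 := by
  classical
  rw [card_hom_option_elim, ← (homOptionElimEquiv W p i).symm.sum_comp, Fintype.sum_sigma]
  refine sum_congr rfl fun φ _ => ?_
  simp [extensionSet_homOptionElimEquiv_symm_self, sq, Nat.card_eq_fintype_card]

theorem card_hom_option_elim_option_elim_le (p : V → ι) (i j : ι) :
    Nat.card ((⊤ : SimpleGraph ι).comap (Option.elim · j (Option.elim · i p)) →g W) ≤
      ∑ φ : (⊤ : SimpleGraph ι).comap p →g W,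
        Nat.card (φ.extensionSet i) * Nat.card (φ.extensionSet j) := by
  classical
  rw [card_hom_option_elim, ← (homOptionElimEquiv W p i).symm.sum_comp, Fintype.sum_sigma]
  refine sum_le_sum fun φ _ => ?_
  calc ∑ w : φ.extensionSet i,
        Nat.card (((homOptionElimEquiv W p i).symm ⟨φ, w⟩).extensionSet j)
      ≤ ∑ _w : φ.extensionSet i, Nat.card (φ.extensionSet j) :=
        sum_le_sum fun w _ => Nat.card_mono (Set.toFinite _)
          (extensionSet_homOptionElimEquiv_symm_subset W ⟨φ, w⟩ j)
    _ = _ := by simp [Nat.card_eq_fintype_card]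

theorem two_mul_card_hom_option_elim_le (p : V → ι) (i j : ι) :
    2 * Nat.card ((⊤ : SimpleGraph ι).comap (Option.elim · j (Option.elim · i p)) →g W) ≤
      Nat.card ((⊤ : SimpleGraph ι).comap (Option.elim · i (Option.elim · i p)) →g W) +
        Nat.card ((⊤ : SimpleGraph ι).comap (Option.elim · j (Option.elim · j p)) →g W) := by
  rw [card_hom_option_elim_option_elim_self, card_hom_option_elim_option_elim_self,
    ← sum_add_distrib]
  grw [card_hom_option_elim_option_elim_le, mul_sum]
  gcongr with φ
  nlinarith [sq_nonneg ((Nat.card (φ.extensionSet i) : ℤ) - Nat.card (φ.extensionSet j))]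

end Labelled

variable {ι β : Type*} [Fintype ι] [DecidableEq ι] (W : SimpleGraph β) [Fintype β]

theorem two_mul_card_hom_completeMultipartite_le (c : ι → ℕ) (i j : ι) :
    2 * Nat.card (K⟦c + Pi.single i 1 + Pi.single j 1⟧ →g W) ≤
      Nat.card (K⟦c + Pi.single i 2⟧ →g W) + Nat.card (K⟦c + Pi.single j 2⟧ →g W) := by
  have key := two_mul_card_hom_option_elim_le W (Sigma.fst : (Σ m, Fin (c m)) → ι) i j
  have fiber (k l : ι) {d : ι → ℕ} (hd : c + Pi.single l 1 + Pi.single k 1 = d) (m : ι) :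
      Nat.card {o // Option.elim o k (Option.elim · l (Sigma.fst : (Σ m, Fin (c m)) → ι)) = m} =
        d m := by
    rw [card_fiber_option_elim, card_fiber_option_elim, card_fiber_sigma_fst, ← hd]
    rfl
  have double (k : ι) : c + Pi.single k 1 + Pi.single k 1 = c + Pi.single k 2 := by
    rw [add_assoc, ← Pi.single_add]
  rwa [card_hom_eq_of_card_fiber W (fiber j i rfl),
    card_hom_eq_of_card_fiber W (fiber i i (double i)),
    card_hom_eq_of_card_fiber W (fiber j j (double j))] at key

theorem card_hom_completeMultipartite_add_single_add_single_le {c : ι → ℕ} {i j : ι}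
    (hij : i ≠ j) (hi : c i = 0) (hj : c j = 0) {x y : ℕ} (h : y ≤ x) :
    Nat.card (K⟦c + Pi.single i x + Pi.single j (y + 1)⟧ →g W) ≤
      Nat.card (K⟦c + Pi.single i (x + 1) + Pi.single j y⟧ →g W) := by
  have hswap (s t : ℕ) : (c + Pi.single i s + Pi.single j t) ∘ Equiv.swap i j =
      c + Pi.single i t + Pi.single j s := by
    ext m
    simp only [Function.comp_apply, Pi.add_apply, Pi.single_apply, Equiv.swap_apply_def]
    split_ifs <;> simp_all
  have hadd_i (s t a : ℕ) : c + Pi.single i s + Pi.single j t + Pi.single i a =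
      c + Pi.single i (s + a) + Pi.single j t := by
    rw [Pi.single_add]
    abel
  have hadd_j (s t b : ℕ) : c + Pi.single i s + Pi.single j t + Pi.single j b =
      c + Pi.single i s + Pi.single j (t + b) := by
    rw [Pi.single_add]
    abel
  have key := le_of_symm_of_two_mul_le
    (g := fun s t => (Nat.card (K⟦c + Pi.single i s + Pi.single j t⟧ →g W) : ℤ))
    (fun s t => by rw [← card_hom_completeMultipartite_comp_perm W _ (Equiv.swap i j), hswap])
    (fun s t => by
      have := two_mul_card_hom_completeMultipartite_le W (c + Pi.single i s + Pi.single j t) i j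
      rw [hadd_i s t 1, hadd_j (s + 1) t 1, hadd_i s t 2, hadd_j s t 2] at this
      exact_mod_cast this) h
  exact_mod_cast key

theorem card_hom_completeMultipartite_add_single_le {c : ι → ℕ} {i j : ι} (hij : i ≠ j)
    (h : c j ≤ c i) :
    Nat.card (K⟦c + Pi.single j 1⟧ →g W) ≤ Nat.card (K⟦c + Pi.single i 1⟧ →g W) := by
  set c₀ := Function.update (Function.update c i 0) j 0
  have e₁ : c + Pi.single j 1 = c₀ + Pi.single i (c i) + Pi.single j (c j + 1) := by
    ext m
    simp only [c₀, Pi.add_apply, Function.update_apply, Pi.single_apply]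
    split_ifs <;> simp_all
  have e₂ : c + Pi.single i 1 = c₀ + Pi.single i (c i + 1) + Pi.single j (c j) := by
    ext m
    simp only [c₀, Pi.add_apply, Function.update_apply, Pi.single_apply]
    split_ifs <;> simp_all
  rw [e₁, e₂]
  exact card_hom_completeMultipartite_add_single_add_single_le W hij
    (by simp [c₀, hij]) (by simp [c₀]) h

end SimpleGraph

section Majorization

variable {ι : Type*} [LinearOrder ι] [LocallyFiniteOrderBot ι] {a b c : ι → ℕ}

theorem sum_Iic_add_single_le {d : ι → ℕ} {i j : ι} (hij : i < j)
    (hmaj : ∀ l, ∑ m ∈ Iic l, (d + Pi.single j 1 : ι → ℕ) m ≤ ∑ m ∈ Iic l, a m)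
    (hle : ∀ m < j, (d + Pi.single i 1 : ι → ℕ) m ≤ a m) (l : ι) :
    ∑ m ∈ Iic l, (d + Pi.single i 1 : ι → ℕ) m ≤ ∑ m ∈ Iic l, a m := by
  by_cases hjl : j ≤ l
  · simpa [sum_add_distrib, hij.le.trans hjl, hjl] using hmaj l
  · exact sum_le_sum fun m hm => hle m ((mem_Iic.mp hm).trans_lt (not_le.mp hjl))

variable [Fintype ι]

theorem exists_lt_lt_of_majorized (hmaj : ∀ l, ∑ m ∈ Iic l, c m ≤ ∑ m ∈ Iic l, a m)
    (hsum : ∑ m, c m = ∑ m, a m) (hne : c ≠ a) :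
    ∃ i j, i < j ∧ c i < a i ∧ a j < c j ∧ ∀ m < j, c m ≤ a m := by
  have hex : ∃ m, a m < c m := by
    by_contra! hle
    exact hne (funext fun m => (sum_eq_sum_iff_of_le fun m _ => hle m).mp hsum m (mem_univ m))
  obtain ⟨j, hj⟩ := exists_minimal_of_wellFoundedLT _ hex
  have hjmin : ∀ m < j, c m ≤ a m := fun m hm => not_lt.mp (hj.not_prop_of_lt hm)
  have hIio : ∑ m ∈ Iio j, c m < ∑ m ∈ Iio j, a m := by
    have := hmaj j
    rw [← Iio_insert, sum_insert (by simp), sum_insert (by simp)] at this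
    have := hj.1
    omega
  obtain ⟨i, hi, hlt⟩ := exists_lt_of_sum_lt hIio
  exact ⟨i, j, mem_Iio.mp hi, hlt, hj.1, hjmin⟩

/-- The invariant along the chain of transfers leading from `b` to `a`. -/
def MajorizedBetween (a b c : ι → ℕ) : Prop :=
  (∀ l, ∑ m ∈ Iic l, c m ≤ ∑ m ∈ Iic l, a m) ∧ ∑ m, c m = ∑ m, a m ∧
    ∀ m, c m ∈ Set.uIcc (a m) (b m)

theorem MajorizedBetween.exists_transfer (hb : Antitone b) (hc : MajorizedBetween a b c)
    (hne : c ≠ a) :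
    ∃ d : ι → ℕ, ∃ i j, i < j ∧ d j ≤ d i ∧ c = d + Pi.single j 1 ∧
      MajorizedBetween a b (d + Pi.single i 1) ∧
      ∑ m, (a m - (d + Pi.single i 1 : ι → ℕ) m) < ∑ m, (a m - c m) := by
  obtain ⟨hmaj, hsum, hbtw⟩ := hc
  obtain ⟨i, j, hij, hi, hj, hjmin⟩ := exists_lt_lt_of_majorized hmaj hsum hne
  have hbi : b i ≤ c i := by have := Set.mem_uIcc.mp (hbtw i); omega
  have hbj : c j ≤ b j := by have := Set.mem_uIcc.mp (hbtw j); omega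
  have hbij := hb hij.le
  set d := Function.update c j (c j - 1)
  have hcd : c = d + Pi.single j 1 := by
    ext m
    rcases eq_or_ne m j with rfl | hm
    · simp [d]
      omega
    · simp [d, hm]
  have hd (m : ι) : (d + Pi.single i 1 : ι → ℕ) m =
      if m = i then c i + 1 else if m = j then c j - 1 else c m := by
    rcases eq_or_ne m i with rfl | hmi
    · simp [d, hij.ne]
    · simp [d, hmi, Function.update_apply]
  refine ⟨d, i, j, hij, ?_, hcd, ⟨?_, ?_, fun m => ?_⟩, ?_⟩
  · simp only [d, Function.update_self, Function.update_of_ne hij.ne]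
    omega
  · refine sum_Iic_add_single_le hij (hcd ▸ hmaj) fun m hm => ?_
    rw [hd]
    split_ifs with h₁ h₂
    · subst h₁; omega
    · exact absurd hm (h₂ ▸ lt_irrefl j)
    · exact hjmin m hm
  · rw [← hsum, hcd]
    simp [sum_add_distrib]
  · have := Set.mem_uIcc.mp (hbtw m)
    rw [hd, Set.mem_uIcc]
    split_ifs with h₁ h₂ <;> subst_vars <;> omega
  · refine sum_lt_sum (fun m _ => ?_) ⟨i, mem_univ i, ?_⟩ <;> rw [hd]
    · split_ifs with h₁ h₂ <;> subst_vars <;> omega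
    · simp only [if_true]
      omega

theorem MajorizedBetween.le {α : Type*} [Preorder α] (P : (ι → ℕ) → α)
    (hP : ∀ (d : ι → ℕ) i j, i < j → d j ≤ d i → P (d + Pi.single j 1) ≤ P (d + Pi.single i 1))
    (hb : Antitone b) (hc : MajorizedBetween a b c) : P c ≤ P a := by
  induction hD : ∑ m, (a m - c m) using Nat.strong_induction_on generalizing c with
  | _ D ih =>
    by_cases hca : c = a
    · rw [hca]
    obtain ⟨d, i, j, hij, hd, rfl, hc', hlt⟩ := hc.exists_transfer hb hca
    exact (hP d i j hij hd).trans (ih _ (hD ▸ hlt) hc' rfl)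

theorem le_of_majorizes {α : Type*} [Preorder α] (P : (ι → ℕ) → α)
    (hP : ∀ (d : ι → ℕ) i j, i < j → d j ≤ d i → P (d + Pi.single j 1) ≤ P (d + Pi.single i 1))
    (hb : Antitone b) (hmaj : ∀ l, ∑ m ∈ Iic l, b m ≤ ∑ m ∈ Iic l, a m)
    (hsum : ∑ m, b m = ∑ m, a m) : P b ≤ P a :=
  MajorizedBetween.le P hP hb ⟨hmaj, hsum, fun _ => Set.right_mem_uIcc⟩

end Majorization

theorem Finset.sum_le_sum_of_card_le_of_forall_le {ι : Type*} [DecidableEq ι] {s t : Finset ι}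
    {f : ι → ℕ} {c : ℕ} (hs : ∀ x ∈ s, c ≤ f x) (ht : ∀ y ∉ s, f y ≤ c) (hcard : #t ≤ #s) :
    ∑ x ∈ t, f x ≤ ∑ x ∈ s, f x := by
  rw [← sum_inter_add_sum_sdiff t s, ← sum_inter_add_sum_sdiff s t, inter_comm]
  refine Nat.add_le_add_left ?_ _
  calc ∑ y ∈ t \ s, f y
      ≤ #(t \ s) • c := sum_le_card_nsmul _ _ _ fun y hy => ht y (mem_sdiff.1 hy).2
    _ ≤ #(s \ t) • c :=
        nsmul_le_nsmul_left (Nat.zero_le c) (card_sdiff_le_card_sdiff_iff.2 hcard)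
    _ ≤ ∑ x ∈ s \ t, f x := card_nsmul_le_sum _ _ _ fun x hx => hs x (mem_sdiff.1 hx).1

namespace SimpleGraph

variable {V ι : Type*}

def homCompleteMultipartiteEquiv (G : SimpleGraph V) (F : ι → Type*) :
    (G →g completeMultipartiteGraph F) ≃ Σ σ : G.Coloring ι, ∀ v, F (σ v) where
  toFun φ := ⟨Coloring.mk (fun v => (φ v).1) fun h => φ.map_adj h, fun v => (φ v).2⟩
  invFun x := ⟨fun v => ⟨x.1 v, x.2 v⟩, fun h => x.1.map_adj h⟩
  left_inv _ := rfl
  right_inv _ := rfl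

theorem card_hom_completeMultipartite [Fintype V] [Fintype ι] (G : SimpleGraph V) (w : ι → ℕ) :
    Nat.card (G →g K⟦w⟧) = ∑ σ : G.Coloring ι, ∏ v, w (σ v) := by
  rw [Nat.card_congr (homCompleteMultipartiteEquiv G _), Nat.card_sigma]
  simp [Nat.card_pi]

variable [Fintype ι] [LinearOrder ι] [LocallyFiniteOrderBot ι]

theorem card_filter_coloring_le_sum_Iic {a : ι → ℕ} (ha : Antitone a) (σ : K⟦a⟧.Coloring ι)
    (i₀ : ι) : #{v | σ v ≤ i₀} ≤ ∑ p ∈ Iic i₀, a p := by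
  set S : Finset (Σ p, Fin (a p)) := {v | σ v ≤ i₀}
  set T := S.image Sigma.fst
  have hST : #S ≤ ∑ p ∈ T, a p :=
    calc #S ≤ #(T.sigma fun p => (univ : Finset (Fin (a p)))) :=
          card_le_card fun v hv => by simpa [T] using ⟨v.2, hv⟩
      _ = ∑ p ∈ T, a p := by simp
  have hT : #T ≤ #(Iic i₀) := by
    refine card_le_card_of_forall_subsingleton (fun p q => ∃ v ∈ S, v.1 = p ∧ σ v = q) ?_ ?_
    · intro p hp
      obtain ⟨v, hv, rfl⟩ := mem_image.mp hp
      exact ⟨σ v, mem_Iic.mpr (mem_filter.mp hv).2, v, hv, rfl, rfl⟩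
    · rintro q - p₁ ⟨-, v₁, -, rfl, hv₁⟩ p₂ ⟨-, v₂, -, rfl, hv₂⟩
      by_contra hne
      exact σ.valid hne (hv₁.trans hv₂.symm)
  refine hST.trans (sum_le_sum_of_card_le_of_forall_le (c := a i₀)
    (fun p hp => ha (mem_Iic.mp hp)) (fun p hp => ha ?_) hT)
  exact (not_le.mp (mem_Iic.not.mp hp)).le

theorem pow_sum_Iic_le_card_hom (b : ι → ℕ) (i₀ : ι) (N : ℕ) :
    N ^ ∑ p ∈ Iic i₀, b p ≤ Nat.card (K⟦b⟧ →g K⟦fun q => if q ≤ i₀ then N else 1⟧) := by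
  rw [card_hom_completeMultipartite]
  refine le_of_eq_of_le ?_
    (single_le_sum (fun σ _ => Nat.zero_le _) (mem_univ (completeMultipartiteGraph.coloring _)))
  rw [Fintype.prod_sigma]
  change _ = ∏ p, ∏ _x : Fin (b p), if p ≤ i₀ then N else 1
  simp [prod_ite, prod_pow_eq_pow_sum, filter_ge_eq_Iic]

theorem card_hom_le_mul_pow_sum_Iic {a : ι → ℕ} (ha : Antitone a) (i₀ : ι) {N : ℕ}
    (hN : 0 < N) :
    Nat.card (K⟦a⟧ →g K⟦fun q => if q ≤ i₀ then N else 1⟧) ≤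
      Nat.card (K⟦a⟧.Coloring ι) * N ^ ∑ p ∈ Iic i₀, a p := by
  rw [card_hom_completeMultipartite, Nat.card_eq_fintype_card, ← card_univ]
  refine (sum_le_card_nsmul _ _ _ fun σ _ => ?_).trans_eq (smul_eq_mul _ _)
  rw [prod_ite, prod_const, prod_const_one, mul_one]
  exact Nat.pow_le_pow_right hN (card_filter_coloring_le_sum_Iic ha σ i₀)

theorem sum_Iic_le_of_forall_card_hom_le {a b : ι → ℕ} (ha : Antitone a) (i₀ : ι)
    (h : ∀ N, 0 < N → Nat.card (K⟦b⟧ →g K⟦fun q => if q ≤ i₀ then N else 1⟧) ≤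
      Nat.card (K⟦a⟧ →g K⟦fun q => if q ≤ i₀ then N else 1⟧)) :
    ∑ p ∈ Iic i₀, b p ≤ ∑ p ∈ Iic i₀, a p := by
  by_contra! hlt
  set C := Nat.card (K⟦a⟧.Coloring ι)
  have hN : 0 < C + 1 := C.succ_pos
  have hle := (pow_sum_Iic_le_card_hom b i₀ (C + 1)).trans
    ((h _ hN).trans (card_hom_le_mul_pow_sum_Iic ha i₀ hN))
  have hgt : (C + 1) ^ (∑ p ∈ Iic i₀, a p + 1) ≤ (C + 1) ^ ∑ p ∈ Iic i₀, b p :=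
    Nat.pow_le_pow_right hN hlt
  have hpos : 0 < (C + 1) ^ ∑ p ∈ Iic i₀, a p := by positivity
  rw [pow_succ] at hgt
  nlinarith

end SimpleGraph

theorem homDensity_le_homDensity_iff {α α' β : Type} [Fintype α] [Fintype α'] [Fintype β]
    [Nonempty β] (G : SimpleGraph α) (G' : SimpleGraph α') (W : SimpleGraph β)
    (h : Fintype.card α = Fintype.card α') :
    homDensity G W ≤ homDensity G' W ↔ Nat.card (G →g W) ≤ Nat.card (G' →g W) := by
  have := Fintype.card_pos (α := β)
  rw [homDensity, homDensity, h, div_le_div_iff_of_pos_right (by positivity), Nat.cast_le]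

theorem stmt_17_general (k : ℕ) (a b : Fin k → ℕ)
    (hamono : Antitone a) (hbmono : Antitone b)
    (hsum : ∑ i, a i = ∑ i, b i) :
    (∀ i : Fin k, ∑ j ∈ Finset.Iic i, b j ≤ ∑ j ∈ Finset.Iic i, a j) ↔
    (∀ (β : Type) [Fintype β] [Nonempty β] (W : SimpleGraph β),
      homDensity (SimpleGraph.completeMultipartiteGraph fun i => Fin (b i)) W ≤
        homDensity (SimpleGraph.completeMultipartiteGraph fun i => Fin (a i)) W) := by
  have hcard : Fintype.card (Σ i, Fin (b i)) = Fintype.card (Σ i, Fin (a i)) := by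
    simp [hsum]
  constructor
  · intro hmaj β _ _ W
    rw [homDensity_le_homDensity_iff _ _ _ hcard]
    exact le_of_majorizes (fun c => Nat.card (K⟦c⟧ →g W))
      (fun _ _ _ hij h => card_hom_completeMultipartite_add_single_le W hij.ne h)
      hbmono hmaj hsum.symm
  · intro h i₀
    refine sum_Iic_le_of_forall_card_hom_le hamono i₀ fun N hN => ?_
    have : Nonempty (Σ q, Fin (if q ≤ i₀ then N else 1)) := ⟨⟨i₀, ⟨0, by simpa⟩⟩⟩
    exact (homDensity_le_homDensity_iff _ _ _ hcard).mp (h _ _)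

theorem stmt_17 (k : ℕ) (hk : 1 ≤ k) (a b : Fin k → ℕ)
    (ha : ∀ i, 0 < a i) (hb : ∀ i, 0 < b i)
    (hamono : Antitone a) (hbmono : Antitone b)
    (hsum : ∑ i, a i = ∑ i, b i) :
    (∀ i : Fin k, ∑ j ∈ Finset.Iic i, b j ≤ ∑ j ∈ Finset.Iic i, a j) ↔
    (∀ (β : Type) [Fintype β] [Nonempty β] (W : SimpleGraph β),
      homDensity (SimpleGraph.completeMultipartiteGraph fun i => Fin (b i)) W ≤
        homDensity (SimpleGraph.completeMultipartiteGraph fun i => Fin (a i)) W) :=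
  stmt_17_general k a b hamono hbmono hsum
end
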